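/- arXiv:1209.4565 — 2 statements merged into one kernel-verified Lean document; each statement's English description precedes it below -/
import Mathlib

section
/- Let n ≥ 2 and let x = (x_2,…,x_{2n−1}) be nonzero complex numbers such that T_k(x) ≠ 0 for 1 ≤ k ≤ n−1, and let y = y(x). Then y_n(x)²/(y_1(x)·y_{n+1}(x)) = 1/(x_n·x_{n+1}) and y_{n+1}(x)/y_n(x) = x_{n+1}·∑_{k=2}^{n} x_k/x_{n+k−1}. (That is, under the birational map y(x) the functions ȳγ_0(y) = y_n²/(y_1 y_{n+1}) and ε̄_0(y) = y_{n+1}/y_n pull back to γ_0(x) = 1/(x_n x_{n+1}) and ε_0(x) = x_{n+1}·∑_{k=2}^{n} x_k/x_{n+k−1}.) -/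
/-!
Only `y_1 = T_1⁻¹`, `y_n = x_n⁻¹` and `y_{n+1} = (x_{n+1}/x_n) T_1` enter. In `y_1 y_{n+1}` the
factor `T_1` cancels, which gives `γ_0`; and `y_{n+1}/y_n = x_{n+1} T_1`, where `T_1` is
the sum `∑_{k=2}^{n} x_k/x_{n+k-1}` defining `ε_0`.
-/

noncomputable section

/-- `Tf n x k = ∑_{j=k+1}^{n} x_j / x_{n+j-1}` (so `Tf n x n = 0`). -/
def Tf (n : ℕ) (x : ℕ → ℂ) (k : ℕ) : ℂ :=
  ∑ j ∈ Finset.Icc (k + 1) n, x j / x (n + j - 1)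

/-- The map `x ↦ y(x)`:
`y_1 = T_1(x)⁻¹`, `y_k = x_k·T_k(x)⁻¹` for `2 ≤ k ≤ n-1`, `y_n = x_n⁻¹`,
`y_{n+l} = (x_{n+l}/x_n)·T_l(x)` for `1 ≤ l ≤ n-2`. -/
def yOf (n : ℕ) (x : ℕ → ℂ) (k : ℕ) : ℂ :=
  if k = 1 then (Tf n x 1)⁻¹
  else if k ≤ n - 1 then x k * (Tf n x k)⁻¹
  else if k = n then (x n)⁻¹
  else (x k / x n) * Tf n x (k - n)

lemma Tf_one (n : ℕ) (x : ℕ → ℂ) :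
    Tf n x 1 = ∑ k ∈ Finset.Icc 2 n, x k / x (n + k - 1) :=
  rfl

lemma yOf_one (n : ℕ) (x : ℕ → ℂ) : yOf n x 1 = (Tf n x 1)⁻¹ := by
  simp [yOf]

lemma yOf_self {n : ℕ} (hn : 2 ≤ n) (x : ℕ → ℂ) : yOf n x n = (x n)⁻¹ := by
  rw [yOf, if_neg (by omega), if_neg (by omega), if_pos rfl]

lemma yOf_add_one_self {n : ℕ} (hn : n ≠ 0) (x : ℕ → ℂ) :
    yOf n x (n + 1) = x (n + 1) / x n * Tf n x 1 := by
  rw [yOf, if_neg (by omega), if_neg (by omega), if_neg (by omega), Nat.add_sub_cancel_left]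

/-- `ȳγ_0` and `ε̄_0` pull back along `y(x)` to
`γ_0(x) = 1/(x_n x_{n+1})` and `ε_0(x) = x_{n+1}·∑_{k=2}^{n} x_k/x_{n+k-1}`. -/
theorem stmt3 (n : ℕ) (hn : 2 ≤ n) (x : ℕ → ℂ)
    (hx : ∀ k, 2 ≤ k → k ≤ 2 * n - 1 → x k ≠ 0)
    (hT : ∀ k, 1 ≤ k → k ≤ n - 1 → Tf n x k ≠ 0) :
    (yOf n x n) ^ 2 / (yOf n x 1 * yOf n x (n + 1)) = 1 / (x n * x (n + 1)) ∧
    yOf n x (n + 1) / yOf n x n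
      = x (n + 1) * ∑ k ∈ Finset.Icc 2 n, x k / x (n + k - 1) := by
  have hxn : x n ≠ 0 := hx n hn (by omega)
  have hxn1 : x (n + 1) ≠ 0 := hx (n + 1) (by omega) (by omega)
  have hT1 : Tf n x 1 ≠ 0 := hT 1 le_rfl (by omega)
  rw [yOf_one, yOf_self hn, yOf_add_one_self (by omega)]
  constructor
  · field_simp
  · rw [← Tf_one]
    field_simp
end
end

section
/- Let n ≥ 2, c ∈ ℂ^×, and let x = (x_2,…,x_{2n−1}) be nonzero complex numbers such that all denominators occurring below are nonzero. Let x′ = e_0^c(x). Then y_j(x′) = y_j(x) for every j ≠ n and y_n(x′) = c·y_n(x). (That is, under the birational change of variables y(x), the explicit map e_0^c corresponds to multiplying the single coordinate y_n by c.) -/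
/-! With `D_k = c·S_k + T_k = c·S - (c - 1)·T_k`, the map `e_0^c` multiplies the ratio
`x_j / x_{n+j-1} = T_{j-1} - T_j` by `c·S² / (D_{j-1}·D_j)`, and the rescaled ratios
`S·(T_{j-1}/D_{j-1} - T_j/D_j)` telescope to `T_k(e_0^c x) = S·T_k / D_k`. Since `e_0^c`
multiplies `x_k` by `S/D_k`, `x_{n+l}` by `D_l/(c·S)` and `x_n` by `1/c`, all these factors
cancel in `y_j` except in `y_n = 1/x_n`. -/

noncomputable section

/-- `Sf n x k = ∑_{j=2}^{k} x_j / x_{n+j-1}` (so `Sf n x 1 = 0`,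
and `S(x) = Sf n x n`). -/
def Sf (n : ℕ) (x : ℕ → ℂ) (k : ℕ) : ℂ :=
  ∑ j ∈ Finset.Icc 2 k, x j / x (n + j - 1)

/-- The rational map `e_0^c`:
`x′_k = x_k·S/(c·S_k + T_k)` for `2 ≤ k ≤ n-1`, `x′_n = x_n/c`, `x′_{n+1} = x_{n+1}/c`,
`x′_{n+l} = x_{n+l}·(c·S_l + T_l)/(c·S)` for `2 ≤ l ≤ n-1`. -/
def e0M (n : ℕ) (c : ℂ) (x : ℕ → ℂ) (k : ℕ) : ℂ :=
  if k ≤ n - 1 then x k * Sf n x n / (c * Sf n x k + Tf n x k)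
  else if k ≤ n + 1 then x k / c
  else x k * (c * Sf n x (k - n) + Tf n x (k - n)) / (c * Sf n x n)

section Sums

variable (n : ℕ) (x : ℕ → ℂ)

lemma Sf_one : Sf n x 1 = 0 := by
  simp [Sf]

lemma Tf_self : Tf n x n = 0 := by
  simp [Tf]

lemma Sf_add_Tf {k : ℕ} (h1 : 1 ≤ k) (h2 : k ≤ n) : Sf n x k + Tf n x k = Sf n x n := by
  unfold Sf Tf
  rw [show (2 : ℕ) = 1 + 1 from rfl, Finset.Icc_add_one_left_eq_Ioc,
    Finset.Icc_add_one_left_eq_Ioc, Finset.Icc_add_one_left_eq_Ioc]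
  exact Finset.sum_Ioc_consecutive _ h1 h2

lemma Tf_one_s4 (hn : 1 ≤ n) : Tf n x 1 = Sf n x n := by
  simpa [Sf_one] using Sf_add_Tf n x le_rfl hn

lemma Tf_eq_add_Tf_succ {k : ℕ} (hk : k < n) :
    Tf n x k = x (k + 1) / x (n + k) + Tf n x (k + 1) := by
  have hIcc : Finset.Icc (k + 1) n = insert (k + 1) (Finset.Icc (k + 2) n) := by
    ext m
    simp only [Finset.mem_insert, Finset.mem_Icc]
    omega
  rw [Tf, hIcc, Finset.sum_insert (by simp), show n + (k + 1) - 1 = n + k by omega]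
  rfl

end Sums

section E0

variable {n : ℕ} {c : ℂ} {x : ℕ → ℂ}

lemma e0M_self (hn : 1 ≤ n) : e0M n c x n = x n / c := by
  rw [e0M, if_neg (by omega), if_pos (by omega)]

lemma e0M_of_le (hS : Sf n x n ≠ 0) {j : ℕ} (hj : j ≤ n) :
    e0M n c x j = x j * Sf n x n / (c * Sf n x j + Tf n x j) := by
  by_cases hj' : j ≤ n - 1
  · rw [e0M, if_pos hj']
  · obtain rfl : j = n := by omega
    rw [e0M_self (by omega), Tf_self, add_zero, mul_div_mul_right _ _ hS]

lemma e0M_add (hS : Sf n x n ≠ 0) {l : ℕ} (hl1 : 1 ≤ l) (hl : l < n) :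
    e0M n c x (n + l) = x (n + l) * (c * Sf n x l + Tf n x l) / (c * Sf n x n) := by
  rcases hl1.eq_or_lt with rfl | hl1
  · rw [e0M, if_neg (by omega), if_pos (by omega), Sf_one, Tf_one_s4 n x (by omega), mul_zero,
      zero_add, mul_div_mul_right _ _ hS]
  · rw [e0M, if_neg (by omega), if_neg (by omega), Nat.add_sub_cancel_left]

lemma e0_den_eq {k : ℕ} (h1 : 1 ≤ k) (h2 : k ≤ n) :
    c * Sf n x k + Tf n x k = c * Sf n x n - (c - 1) * Tf n x k := by
  rw [← Sf_add_Tf n x h1 h2]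
  ring

lemma e0_den_ne_zero (hc : c ≠ 0) (hS : Sf n x n ≠ 0)
    (hden : ∀ k, 2 ≤ k → k ≤ n - 1 → c * Sf n x k + Tf n x k ≠ 0)
    {k : ℕ} (h1 : 1 ≤ k) (h2 : k ≤ n) : c * Sf n x k + Tf n x k ≠ 0 := by
  rcases h1.eq_or_lt with rfl | h1
  · rwa [Sf_one, Tf_one_s4 n x h2, mul_zero, zero_add]
  rcases h2.eq_or_lt with rfl | h2
  · rw [Tf_self, add_zero]
    exact mul_ne_zero hc hS
  exact hden k h1 (by omega)

lemma telescope_step {K : Type*} [Field K] {c S a b Da Db : K}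
    (hDa : Da = c * S - (c - 1) * a) (hDb : Db = c * S - (c - 1) * b) (ha : Da ≠ 0)
    (hb : Db ≠ 0) :
    (a - b) * (S / Db) * (c * S / Da) + S * b / Db = S * a / Da := by
  field_simp
  linear_combination S * b * hDa - S * a * hDb

lemma Tf_e0M (hc : c ≠ 0) (hS : Sf n x n ≠ 0)
    (hden : ∀ k, 2 ≤ k → k ≤ n - 1 → c * Sf n x k + Tf n x k ≠ 0)
    {k : ℕ} (h1 : 1 ≤ k) (h2 : k ≤ n) :
    Tf n (e0M n c x) k = Sf n x n * Tf n x k / (c * Sf n x k + Tf n x k) := by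
  induction h2 using Nat.decreasingInduction with
  | self => simp [Tf_self]
  | of_succ k hk ih =>
    have hD := e0_den_ne_zero hc hS hden h1 hk.le
    have hD' := e0_den_ne_zero hc hS hden (by omega) (by omega : k + 1 ≤ n)
    have hsummand : e0M n c x (k + 1) / e0M n c x (n + k) =
        x (k + 1) / x (n + k) * (Sf n x n / (c * Sf n x (k + 1) + Tf n x (k + 1))) *
          (c * Sf n x n / (c * Sf n x k + Tf n x k)) := by
      rw [e0M_of_le hS (by omega), e0M_add hS h1 hk]
      generalize c * Sf n x k + Tf n x k = D
      rw [div_div_eq_mul_div]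
      ring
    have ht : x (k + 1) / x (n + k) = Tf n x k - Tf n x (k + 1) := by
      rw [Tf_eq_add_Tf_succ n x hk]
      ring
    rw [Tf_eq_add_Tf_succ n _ hk, hsummand, ih (by omega), ht]
    exact telescope_step (e0_den_eq h1 hk.le) (e0_den_eq (by omega) hk) hD hD'

lemma yOf_e0M_one (hn : 1 ≤ n) (hc : c ≠ 0) (hS : Sf n x n ≠ 0)
    (hden : ∀ k, 2 ≤ k → k ≤ n - 1 → c * Sf n x k + Tf n x k ≠ 0) :
    yOf n (e0M n c x) 1 = yOf n x 1 := by
  rw [yOf, if_pos rfl, yOf, if_pos rfl, Tf_e0M hc hS hden le_rfl hn, Sf_one, Tf_one_s4 n x hn,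
    mul_zero, zero_add, mul_div_cancel_right₀ _ hS]

lemma yOf_e0M_of_le (hc : c ≠ 0) (hS : Sf n x n ≠ 0)
    (hden : ∀ k, 2 ≤ k → k ≤ n - 1 → c * Sf n x k + Tf n x k ≠ 0)
    {j : ℕ} (hj2 : 2 ≤ j) (hj : j ≤ n - 1) : yOf n (e0M n c x) j = yOf n x j := by
  have hD := e0_den_ne_zero hc hS hden (by omega) (by omega : j ≤ n)
  rw [yOf, if_neg (by omega), if_pos hj, yOf, if_neg (by omega), if_pos hj,
    e0M_of_le hS (by omega), Tf_e0M hc hS hden (by omega) (by omega)]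
  field_simp

lemma yOf_e0M_self (hn : 2 ≤ n) : yOf n (e0M n c x) n = c * yOf n x n := by
  rw [yOf, if_neg (by omega), if_neg (by omega), if_pos rfl, yOf, if_neg (by omega),
    if_neg (by omega), if_pos rfl, e0M_self (by omega), inv_div, div_eq_mul_inv]

lemma yOf_e0M_add (hc : c ≠ 0) (hS : Sf n x n ≠ 0)
    (hden : ∀ k, 2 ≤ k → k ≤ n - 1 → c * Sf n x k + Tf n x k ≠ 0)
    {l : ℕ} (hl1 : 1 ≤ l) (hl : l ≤ n - 2) : yOf n (e0M n c x) (n + l) = yOf n x (n + l) := by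
  have hD := e0_den_ne_zero hc hS hden hl1 (by omega : l ≤ n)
  rw [yOf, if_neg (by omega), if_neg (by omega), if_neg (by omega), yOf, if_neg (by omega),
    if_neg (by omega), if_neg (by omega), Nat.add_sub_cancel_left, e0M_self (by omega),
    e0M_add hS hl1 (by omega), Tf_e0M hc hS hden hl1 (by omega)]
  field_simp

end E0

theorem stmt4_general (n : ℕ) (hn : 2 ≤ n) (c : ℂ) (hc : c ≠ 0) (x : ℕ → ℂ)
    (hS : Sf n x n ≠ 0)
    (hden : ∀ k, 2 ≤ k → k ≤ n - 1 → c * Sf n x k + Tf n x k ≠ 0) :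
    (∀ j, 1 ≤ j → j ≤ 2 * n - 2 → j ≠ n → yOf n (e0M n c x) j = yOf n x j) ∧
    yOf n (e0M n c x) n = c * yOf n x n := by
  refine ⟨fun j hj1 hj2 hjn => ?_, yOf_e0M_self hn⟩
  rcases hj1.eq_or_lt with rfl | hj1
  · exact yOf_e0M_one (by omega) hc hS hden
  rcases le_or_gt j (n - 1) with hj | hj
  · exact yOf_e0M_of_le hc hS hden hj1 hj
  obtain ⟨l, rfl⟩ : ∃ l, j = n + l := ⟨j - n, by omega⟩
  exact yOf_e0M_add hc hS hden (by omega) (by omega)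

/-- in the coordinates `y(x)`, the map `e_0^c` multiplies the single
coordinate `y_n` by `c` and fixes all other coordinates. -/
theorem stmt4 (n : ℕ) (hn : 2 ≤ n) (c : ℂ) (hc : c ≠ 0) (x : ℕ → ℂ)
    (hx : ∀ k, 2 ≤ k → k ≤ 2 * n - 1 → x k ≠ 0)
    (hT : ∀ k, 1 ≤ k → k ≤ n - 1 → Tf n x k ≠ 0)
    (hS : Sf n x n ≠ 0)
    (hden : ∀ k, 2 ≤ k → k ≤ n - 1 → c * Sf n x k + Tf n x k ≠ 0)
    (hT' : ∀ k, 1 ≤ k → k ≤ n - 1 → Tf n (e0M n c x) k ≠ 0) :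
    (∀ j, 1 ≤ j → j ≤ 2 * n - 2 → j ≠ n → yOf n (e0M n c x) j = yOf n x j) ∧
    yOf n (e0M n c x) n = c * yOf n x n :=
  stmt4_general n hn c hc x hS hden
end
end
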